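/- arXiv:2211.14704 — 2 statements merged into one kernel-verified Lean document; each statement's English description precedes it below -/
import Mathlib

section
/- Let G be a connected d-regular graph on n vertices, let Ĝ = K_1 + G be its cone with apex c, and let H be the graph obtained from Ĝ by attaching a one-way infinite path to c. Then for all vertices u, v of G and all real t, |⟨e_v, e^{−itA(H)} e_u⟩ − ⟨e_v, e^{−itA(G)} e_u⟩| ≤ 2/n. -/
/-!
Write `p = 𝟙/n` for the projection of every basis vector `e_a` onto the constant vectors, so
that `e_a = p + w_a` with `w_a ⊥ 𝟙`. A vector of `ℓ²(V(G))` orthogonal to `𝟙`, placed on the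
copy of `G` inside `H`, is moved by `A(H)` exactly as by `A(G)`: the apex sees the coordinate sum,
which is `0`, and the tail sees nothing. Regularity makes `𝟙` an eigenvector of the symmetric
`A(G)`, so `𝟙ᗮ` is `A(G)`-invariant and hence `e^{-itA(H)}` and `e^{-itA(G)}` agree on it. In
`⟨e_v, e^{-itA(H)} e_u⟩ - ⟨e_v, e^{-itA(G)} e_u⟩` every term involving `w_u` cancels, and so does
the one involving `w_v` after moving `e^{-itA(H)}` to the other side as `e^{itA(H)}`. What is left,
`⟨p, e^{-itA(H)} p⟩ - ⟨e_v, e^{-itA(G)} p⟩`, has two terms of modulus at most `‖p‖² = 1/n`, the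
first because `e^{-itA(H)}` is unitary, the second because `p` is an eigenvector of `A(G)`.
-/

noncomputable section

open Matrix

/-- Vertices of the cone `Ĝ = K_1 + G` with a one-way infinite path attached at the apex:
`Sum.inl a` is the vertex `a` of `G`, `Sum.inr 0` is the apex `c`, and `Sum.inr (j+1)` is
the tail vertex `q_{j+1}`. -/
abbrev ConeTailV (n : ℕ) := Fin n ⊕ ℕ

/-- Adjacency in `H`: the edges of `G`, the edges from the apex `c` to all of `V(G)`,
and the path edges `c q_1, q_1 q_2, q_2 q_3, …`. -/
def coneTailAdj (n : ℕ) (G : SimpleGraph (Fin n)) (x y : ConeTailV n) : Prop :=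
  (∃ a b : Fin n, G.Adj a b ∧ x = Sum.inl a ∧ y = Sum.inl b) ∨
  (∃ a : Fin n, (x = Sum.inl a ∧ y = Sum.inr 0) ∨ (y = Sum.inl a ∧ x = Sum.inr 0)) ∨
  (∃ j : ℕ, (x = Sum.inr j ∧ y = Sum.inr (j + 1)) ∨ (y = Sum.inr j ∧ x = Sum.inr (j + 1)))

/-- The Hilbert space `ℓ²(V(H))`. -/
abbrev coneTailSpace (n : ℕ) := lp (fun _ : ConeTailV n => ℂ) 2

/-- The standard orthonormal basis vector `e_w` of `ℓ²(V(H))`. -/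
def stdVec {n : ℕ} (w : ConeTailV n) : coneTailSpace n := lp.single 2 w 1

open scoped Classical

open NormedSpace
open scoped Nat InnerProductSpace

section OperatorExp

variable {𝕜 V W : Type*} [RCLike 𝕜] [NormedAddCommGroup V] [NormedSpace 𝕜 V] [CompleteSpace V]
  [NormedAddCommGroup W] [NormedSpace 𝕜 W] [CompleteSpace W]

namespace ContinuousLinearMap

theorem hasSum_exp_apply (B : V →L[𝕜] V) (x : V) :
    HasSum (fun k : ℕ => (k !⁻¹ : 𝕜) • (B ^ k) x) (exp B x) :=
  (exp_series_hasSum_exp' (𝕂 := 𝕜) B).mapL (apply 𝕜 V x)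

theorem exp_apply_map_of_intertwine {B : V →L[𝕜] V} {M : W →L[𝕜] W} {L : W →L[𝕜] V}
    {S : Set W} (hS : Set.MapsTo M S S) (hBL : ∀ x ∈ S, B (L x) = L (M x))
    {x : W} (hx : x ∈ S) : exp B (L x) = L (exp M x) := by
  have hpow : ∀ k : ℕ, ∀ x ∈ S, (B ^ k) (L x) = L ((M ^ k) x) := by
    intro k
    induction k with
    | zero => simp
    | succ k ih =>
      intro x hx
      rw [pow_succ, pow_succ, mul_apply_eq_comp, mul_apply_eq_comp, hBL x hx, ih _ (hS hx)]
  refine (B.hasSum_exp_apply (L x)).unique ?_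
  simpa only [hpow _ x hx, map_smul] using (M.hasSum_exp_apply x).mapL L

theorem exp_apply_of_apply_eq_smul {M : W →L[𝕜] W} {μ : 𝕜} {x : W} (h : M x = μ • x) :
    exp M x = exp μ • x := by
  have hpow : ∀ k : ℕ, (M ^ k) x = μ ^ k • x := fun k => by
    induction k with
    | zero => simp
    | succ k ih => rw [pow_succ, mul_apply_eq_comp, h, map_smul, ih, smul_smul, pow_succ']
  refine (M.hasSum_exp_apply x).unique ?_
  simpa only [hpow, smul_smul, smul_eq_mul] using
    (exp_series_hasSum_exp' (𝕂 := 𝕜) μ).smul_const x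

theorem map_exp_apply_of_map_apply_eq_mul {M : W →L[𝕜] W} {ℓ : W →L[𝕜] 𝕜} {μ : 𝕜}
    (h : ∀ x, ℓ (M x) = μ * ℓ x) (x : W) : ℓ (exp M x) = exp μ * ℓ x := by
  rw [← exp_apply_map_of_intertwine (B := μ • ContinuousLinearMap.id 𝕜 𝕜) (Set.mapsTo_univ _ _)
    (fun y _ => (h y).symm) (Set.mem_univ x)]
  exact exp_apply_of_apply_eq_smul rfl

end ContinuousLinearMap

end OperatorExp

theorem exp_smul_mem_unitary_of_isSelfAdjoint {H : Type*} [NormedAddCommGroup H]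
    [InnerProductSpace ℂ H] [CompleteSpace H] {A : H →L[ℂ] H} (hA : IsSelfAdjoint A) (t : ℝ) :
    exp ((-(t : ℂ) * Complex.I) • A) ∈ unitary (H →L[ℂ] H) := by
  -- `exp` itself does not depend on this instance; only the unitarity lemma asks for it.
  let : NormedAlgebra ℚ (H →L[ℂ] H) := NormedAlgebra.restrictScalars ℚ ℂ _
  refine exp_mem_unitary_of_mem_skewAdjoint ?_
  rw [skewAdjoint.mem_iff, star_smul, hA.star_eq, ← neg_smul]
  congr 1
  simp

namespace Matrix

variable {ι : Type*} [Fintype ι] [DecidableEq ι]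

-- The operator norm is built to induce the product topology, so `exp N` is the usual one.
open scoped Matrix.Norms.L2Operator in
theorem toEuclideanCLM_exp (N : Matrix ι ι ℂ) :
    toEuclideanCLM (𝕜 := ℂ) (exp N) = exp (toEuclideanCLM (𝕜 := ℂ) N) :=
  map_exp_of_mem_ball (𝕂 := ℂ) (toEuclideanCLM (𝕜 := ℂ) (n := ι))
    (LinearMap.continuous_of_finiteDimensional
      (toEuclideanCLM (𝕜 := ℂ) (n := ι)).toAlgEquiv.toLinearMap) N
    ((expSeries_radius_eq_top ℂ (Matrix ι ι ℂ)).symm ▸ edist_lt_top _ _)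

theorem exp_apply_eq_inner (N : Matrix ι ι ℂ) (i j : ι) :
    exp N i j = ⟪EuclideanSpace.single i 1,
      exp (toEuclideanCLM (𝕜 := ℂ) N) (EuclideanSpace.single j 1)⟫_ℂ := by
  rw [← toEuclideanCLM_exp, EuclideanSpace.inner_single_left]
  simp [mulVec_single]

end Matrix

def onesVec (n : ℕ) : EuclideanSpace ℂ (Fin n) := WithLp.toLp 2 1

def uniformVec (n : ℕ) : EuclideanSpace ℂ (Fin n) := (n : ℂ)⁻¹ • onesVec n

section ConstantVectors

variable {n : ℕ}

theorem inner_onesVec_left (x : EuclideanSpace ℂ (Fin n)) : ⟪onesVec n, x⟫_ℂ = ∑ a, x a := by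
  simp [onesVec, PiLp.inner_apply]

theorem inner_onesVec_single (a : Fin n) :
    ⟪onesVec n, EuclideanSpace.single a (1 : ℂ)⟫_ℂ = 1 := by
  simp [inner_onesVec_left]

theorem inner_onesVec_self : ⟪onesVec n, onesVec n⟫_ℂ = n := by
  rw [inner_onesVec_left]
  simp [onesVec]

theorem inner_uniformVec_left (x : EuclideanSpace ℂ (Fin n)) :
    ⟪uniformVec n, x⟫_ℂ = (n : ℂ)⁻¹ * ⟪onesVec n, x⟫_ℂ := by
  rw [uniformVec, inner_smul_left, Complex.conj_inv, Complex.conj_natCast]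

theorem inner_onesVec_single_sub_uniformVec (a : Fin n) :
    ⟪onesVec n, EuclideanSpace.single a 1 - uniformVec n⟫_ℂ = 0 := by
  have hn : (n : ℂ) ≠ 0 := Nat.cast_ne_zero.mpr (Fin.pos a).ne'
  rw [inner_sub_right, inner_onesVec_single, uniformVec, inner_smul_right, inner_onesVec_self,
    inv_mul_cancel₀ hn, sub_self]

theorem inner_single_uniformVec (a : Fin n) :
    ⟪EuclideanSpace.single a 1, uniformVec n⟫_ℂ = (n : ℂ)⁻¹ := by
  simp [uniformVec, onesVec, EuclideanSpace.inner_single_left]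

theorem norm_uniformVec_sq : ‖uniformVec n‖ ^ 2 = (n : ℝ)⁻¹ := by
  rw [@norm_sq_eq_re_inner ℂ, uniformVec, inner_smul_left, inner_smul_right, inner_onesVec_self]
  rcases n.eq_zero_or_pos with rfl | hn
  · simp
  · simp [field]

end ConstantVectors

namespace SimpleGraph

variable {n d : ℕ} (G : SimpleGraph (Fin n)) [DecidableRel G.Adj]

abbrev adjCLM : EuclideanSpace ℂ (Fin n) →L[ℂ] EuclideanSpace ℂ (Fin n) :=
  Matrix.toEuclideanCLM (𝕜 := ℂ) (G.adjMatrix ℂ)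

variable {G}

theorem adjCLM_onesVec (hreg : G.IsRegularOfDegree d) :
    G.adjCLM (onesVec n) = (d : ℂ) • onesVec n := by
  ext a
  simp only [onesVec, Matrix.ofLp_toEuclideanCLM, PiLp.smul_apply, smul_eq_mul]
  exact adjMatrix_mulVec_const_apply_of_regular hreg

theorem inner_onesVec_adjCLM (hreg : G.IsRegularOfDegree d) (x : EuclideanSpace ℂ (Fin n)) :
    ⟪onesVec n, G.adjCLM x⟫_ℂ = d * ⟪onesVec n, x⟫_ℂ := by
  have hsa : IsSelfAdjoint G.adjCLM := (G.isHermitian_adjMatrix ℂ).isSelfAdjoint.map _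
  rw [← ContinuousLinearMap.adjoint_inner_left, hsa.adjoint_eq, adjCLM_onesVec hreg,
    inner_smul_left, Complex.conj_natCast]

theorem inner_onesVec_exp_smul_adjCLM (hreg : G.IsRegularOfDegree d) (c : ℂ)
    (x : EuclideanSpace ℂ (Fin n)) :
    ⟪onesVec n, exp (c • G.adjCLM) x⟫_ℂ = exp (c * d) * ⟪onesVec n, x⟫_ℂ :=
  ContinuousLinearMap.map_exp_apply_of_map_apply_eq_mul (ℓ := innerSL ℂ (onesVec n))
    (fun y => by simp [inner_onesVec_adjCLM hreg, mul_assoc]) x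

theorem exp_smul_adjCLM_onesVec (hreg : G.IsRegularOfDegree d) (c : ℂ) :
    exp (c • G.adjCLM) (onesVec n) = exp (c * d) • onesVec n :=
  ContinuousLinearMap.exp_apply_of_apply_eq_smul (by simp [adjCLM_onesVec hreg, smul_smul])

end SimpleGraph

theorem inner_stdVec_left {n : ℕ} (z : ConeTailV n) (f : coneTailSpace n) :
    ⟪stdVec z, f⟫_ℂ = f z := by
  simp [stdVec, lp.inner_single_left]

def coneEmbed (n : ℕ) : EuclideanSpace ℂ (Fin n) →L[ℂ] coneTailSpace n :=
  ∑ a, (EuclideanSpace.proj a).smulRight (stdVec (Sum.inl a))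

section ConeEmbed

variable {n : ℕ}

theorem coneEmbed_apply (x : EuclideanSpace ℂ (Fin n)) :
    coneEmbed n x = ∑ a, x a • stdVec (Sum.inl a) := by
  simp [coneEmbed]

theorem coneEmbed_apply_inl (x : EuclideanSpace ℂ (Fin n)) (b : Fin n) :
    coneEmbed n x (Sum.inl b) = x b := by
  rw [coneEmbed_apply, lp.coeFn_sum]
  simp [stdVec, lp.single_apply, Pi.single_apply]

theorem coneEmbed_apply_inr (x : EuclideanSpace ℂ (Fin n)) (j : ℕ) :
    coneEmbed n x (Sum.inr j) = 0 := by
  rw [coneEmbed_apply, lp.coeFn_sum]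
  simp [stdVec, lp.single_apply]

theorem inner_coneEmbed_coneEmbed (x y : EuclideanSpace ℂ (Fin n)) :
    ⟪coneEmbed n x, coneEmbed n y⟫_ℂ = ⟪x, y⟫_ℂ := by
  simp [coneEmbed_apply x, inner_stdVec_left, coneEmbed_apply_inl, PiLp.inner_apply]

theorem norm_coneEmbed (x : EuclideanSpace ℂ (Fin n)) : ‖coneEmbed n x‖ = ‖x‖ := by
  rw [norm_eq_sqrt_re_inner (𝕜 := ℂ), inner_coneEmbed_coneEmbed, ← norm_eq_sqrt_re_inner]

theorem coneEmbed_single (a : Fin n) :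
    coneEmbed n (EuclideanSpace.single a 1) = stdVec (Sum.inl a) := by
  rw [coneEmbed_apply, Fintype.sum_eq_single a fun b hb => by simp [hb]]
  simp

end ConeEmbed

section ConeTail

variable {n d : ℕ} {G : SimpleGraph (Fin n)} [DecidableRel G.Adj]
  {A : coneTailSpace n →L[ℂ] coneTailSpace n}

theorem apply_coneEmbed_of_inner_onesVec_eq_zero
    (hA : ∀ x y : ConeTailV n, ⟪stdVec x, A (stdVec y)⟫_ℂ = if coneTailAdj n G x y then 1 else 0)
    {w : EuclideanSpace ℂ (Fin n)} (hw : ⟪onesVec n, w⟫_ℂ = 0) :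
    A (coneEmbed n w) = coneEmbed n (G.adjCLM w) := by
  refine lp.ext (funext fun z => ?_)
  rw [← inner_stdVec_left z (A _), coneEmbed_apply, map_sum, inner_sum]
  simp only [map_smul, inner_smul_right, hA]
  rcases z with b | _ | j
  · simp [coneTailAdj, coneEmbed_apply_inl, SimpleGraph.adjMatrix_mulVec_apply, Finset.sum_ite,
      SimpleGraph.neighborFinset_eq_filter]
  · simpa [coneTailAdj, coneEmbed_apply_inr, inner_onesVec_left] using hw
  · simp [coneTailAdj, coneEmbed_apply_inr]

theorem exp_smul_apply_coneEmbed
    (hA : ∀ x y : ConeTailV n, ⟪stdVec x, A (stdVec y)⟫_ℂ = if coneTailAdj n G x y then 1 else 0)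
    (hreg : G.IsRegularOfDegree d) (c : ℂ) {w : EuclideanSpace ℂ (Fin n)}
    (hw : ⟪onesVec n, w⟫_ℂ = 0) :
    exp (c • A) (coneEmbed n w) = coneEmbed n (exp (c • G.adjCLM) w) :=
  ContinuousLinearMap.exp_apply_map_of_intertwine (S := {w | ⟪onesVec n, w⟫_ℂ = 0})
    (fun x (hx : _ = 0) => by simp [SimpleGraph.inner_onesVec_adjCLM hreg, hx])
    (fun x hx => by simp [apply_coneEmbed_of_inner_onesVec_eq_zero hA hx]) hw

theorem inner_stdVec_exp_sub_exp_adjMatrix_apply (hsa : IsSelfAdjoint A)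
    (hA : ∀ x y : ConeTailV n, ⟪stdVec x, A (stdVec y)⟫_ℂ = if coneTailAdj n G x y then 1 else 0)
    (hreg : G.IsRegularOfDegree d) (c : ℂ) (u v : Fin n) :
    ⟪stdVec (Sum.inl v), exp (c • A) (stdVec (Sum.inl u))⟫_ℂ - exp (c • G.adjMatrix ℂ) v u =
      ⟪coneEmbed n (uniformVec n), exp (c • A) (coneEmbed n (uniformVec n))⟫_ℂ -
        ⟪EuclideanSpace.single v 1, exp (c • G.adjCLM) (uniformVec n)⟫_ℂ := by
  set p := uniformVec n
  set T := exp (c • A)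
  have hadj : ∀ x y, ⟪x, T y⟫_ℂ = ⟪exp (star c • A) x, y⟫_ℂ := fun x y => by
    rw [← ContinuousLinearMap.adjoint_inner_left, ← ContinuousLinearMap.star_eq_adjoint, star_exp,
      star_smul, hsa.star_eq]
  have hsplit (a : Fin n) : EuclideanSpace.single a (1 : ℂ) = p + (EuclideanSpace.single a 1 - p) :=
    (add_sub_cancel p _).symm
  have hperp : ⟪exp (star c • G.adjCLM) (EuclideanSpace.single v 1 - p), p⟫_ℂ = 0 := by
    rw [inner_eq_zero_symm, inner_uniformVec_left, SimpleGraph.inner_onesVec_exp_smul_adjCLM hreg,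
      inner_onesVec_single_sub_uniformVec, mul_zero, mul_zero]
  have hleft : ⟪coneEmbed n (EuclideanSpace.single v 1), T (coneEmbed n p)⟫_ℂ =
      ⟪coneEmbed n p, T (coneEmbed n p)⟫_ℂ := by
    rw [hsplit v, map_add, inner_add_left, hadj (coneEmbed n (EuclideanSpace.single v 1 - p)),
      exp_smul_apply_coneEmbed hA hreg _ (inner_onesVec_single_sub_uniformVec v),
      inner_coneEmbed_coneEmbed, hperp, add_zero]
  rw [← coneEmbed_single, ← coneEmbed_single, Matrix.exp_apply_eq_inner, map_smul, hsplit u,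
    map_add, map_add, inner_add_right, hleft,
    exp_smul_apply_coneEmbed hA hreg _ (inner_onesVec_single_sub_uniformVec u),
    inner_coneEmbed_coneEmbed, map_add, inner_add_right]
  ring

end ConeTail

theorem cone_tail_transfer_bound_general (n d : ℕ) (G : SimpleGraph (Fin n))
    [DecidableRel G.Adj] (hreg : G.IsRegularOfDegree d)
    (A : coneTailSpace n →L[ℂ] coneTailSpace n) (hsa : IsSelfAdjoint A)
    (hA : ∀ x y : ConeTailV n, (inner ℂ (stdVec x) (A (stdVec y)) : ℂ)
      = if coneTailAdj n G x y then 1 else 0)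
    (u v : Fin n) (t : ℝ) :
    ‖
        ((inner ℂ (stdVec (Sum.inl v : ConeTailV n))
            (NormedSpace.exp ((-(t : ℂ) * Complex.I) • A)
              (stdVec (Sum.inl u : ConeTailV n))) : ℂ)
          - NormedSpace.exp ((-(t : ℂ) * Complex.I) • G.adjMatrix ℂ) v u)‖
      ≤ 2 / (n : ℝ) := by
  set c := -(t : ℂ) * Complex.I
  set p := uniformVec n with hp
  have hcone : ‖⟪coneEmbed n p, exp (c • A) (coneEmbed n p)⟫_ℂ‖ ≤ (n : ℝ)⁻¹ := by
    refine (norm_inner_le_norm _ _).trans_eq ?_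
    rw [ContinuousLinearMap.norm_map_of_mem_unitary (exp_smul_mem_unitary_of_isSelfAdjoint hsa t),
      ← sq, norm_coneEmbed, norm_uniformVec_sq]
  have hgraph : ‖⟪EuclideanSpace.single v 1, exp (c • G.adjCLM) p⟫_ℂ‖ = (n : ℝ)⁻¹ := by
    have hEp : exp (c • G.adjCLM) p = exp (c * d) • p := by
      rw [hp, uniformVec, map_smul, SimpleGraph.exp_smul_adjCLM_onesVec hreg, smul_comm]
    have hcd : c * d = ((-(t * d) : ℝ) : ℂ) * Complex.I := by push_cast; ring
    rw [hEp, inner_smul_right, inner_single_uniformVec, norm_mul, hcd, ← Complex.exp_eq_exp_ℂ,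
      Complex.norm_exp_ofReal_mul_I, one_mul, norm_inv, Complex.norm_natCast]
  rw [inner_stdVec_exp_sub_exp_adjMatrix_apply hsa hA hreg]
  calc _ ≤ (n : ℝ)⁻¹ + (n : ℝ)⁻¹ := (norm_sub_le _ _).trans (add_le_add hcone hgraph.le)
    _ = 2 / n := by ring

/-- Let `G` be a connected `d`-regular graph on `n` vertices and let `H` be its cone with
a one-way infinite path attached at the apex.  Then for all vertices `u, v` of `G` and all
real `t`, `|⟨e_v, e^{-itA(H)} e_u⟩ - ⟨e_v, e^{-itA(G)} e_u⟩| ≤ 2/n`. -/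
theorem cone_tail_transfer_bound (n d : ℕ) (G : SimpleGraph (Fin n))
    [DecidableRel G.Adj] (hconn : G.Connected) (hreg : G.IsRegularOfDegree d)
    (A : coneTailSpace n →L[ℂ] coneTailSpace n) (hsa : IsSelfAdjoint A)
    (hA : ∀ x y : ConeTailV n, (inner ℂ (stdVec x) (A (stdVec y)) : ℂ)
      = if coneTailAdj n G x y then 1 else 0)
    (u v : Fin n) (t : ℝ) :
    ‖
        ((inner ℂ (stdVec (Sum.inl v : ConeTailV n))
            (NormedSpace.exp ((-(t : ℂ) * Complex.I) • A)
              (stdVec (Sum.inl u : ConeTailV n))) : ℂ)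
          - NormedSpace.exp ((-(t : ℂ) * Complex.I) • G.adjMatrix ℂ) v u)‖
      ≤ 2 / (n : ℝ) :=
  cone_tail_transfer_bound_general n d G hreg A hsa hA u v t
end
end

section
/- Let G be a connected d-regular graph on n vertices which has perfect state transfer between vertices u and v at time τ, i.e., |⟨e_v, e^{−iτA(G)} e_u⟩| = 1. Let H be the graph obtained from the cone Ĝ = K_1 + G by attaching a one-way infinite path to the apex vertex. Then |⟨e_v, e^{−iτA(H)} e_u⟩| ≥ 1 − 2/n; in particular, perfect state transfer between u and v survives the attached tail asymptotically. -/
noncomputable section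

open Matrix

open scoped Classical

/-
Vectors of `ℓ²(V(H))` supported on `V(G)` with coordinate sum zero form a subspace `W` on which
`A(H)` acts as `A(G)`: the apex only sees the coordinate sum, and for a `d`-regular `G` the
matrix `A(G)` preserves sum-zero vectors. Hence `U = e^{-iτA(H)}` and `U* = e^{iτA(H)}` act on
`W` as the corresponding exponentials of `A(G)`. Split `e_u = (e_u - 𝟙/n) + 𝟙/n`. The first part
contributes `E_{vu} - e^{-iτd}/n`, where `E = e^{-iτA(G)}` and `𝟙` is an eigenvector of `A(G)`.
Since `U*` maps `W` into itself, `U 𝟙` is orthogonal to `W`, so the second part contributes only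
`⟨𝟙, U 𝟙⟩/n²`, of modulus at most `1/n` by unitarity. As `|E_{vu}| = 1`, the amplitude is at
least `1 - 2/n`.
-/

open NormedSpace

section Exponential

variable {𝕜 E F : Type*} [RCLike 𝕜] [NormedAddCommGroup E] [NormedSpace 𝕜 E] [CompleteSpace E]
  [NormedAddCommGroup F] [NormedSpace 𝕜 F] [CompleteSpace F]

theorem exp_comp_eq_comp_exp {S : E →L[𝕜] E} {T : F →L[𝕜] F} {K : E →L[𝕜] F}
    (h : T ∘L K = K ∘L S) : exp T ∘L K = K ∘L exp S := by
  have hpow : ∀ k : ℕ, (T ^ k) ∘L K = K ∘L (S ^ k) := by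
    intro k
    induction k with
    | zero => rfl
    | succ k ih =>
      rw [pow_succ, pow_succ, ContinuousLinearMap.mul_def, ContinuousLinearMap.mul_def,
        ContinuousLinearMap.comp_assoc, h, ← ContinuousLinearMap.comp_assoc, ih,
        ContinuousLinearMap.comp_assoc]
  have hT := (exp_series_hasSum_exp' (𝕂 := 𝕜) T).mapL ((ContinuousLinearMap.compL 𝕜 E F F).flip K)
  have hS := (exp_series_hasSum_exp' (𝕂 := 𝕜) S).mapL (ContinuousLinearMap.compL 𝕜 E E F K)
  simp only [ContinuousLinearMap.compL_apply, ContinuousLinearMap.flip_apply,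
    ContinuousLinearMap.smul_comp, ContinuousLinearMap.comp_smul, hpow] at hT hS
  exact hT.unique hS

theorem exp_apply_of_apply_eq_smul {T : F →L[𝕜] F} {x : F} {μ : 𝕜} (h : T x = μ • x) :
    exp T x = exp μ • x := by
  let K : 𝕜 →L[𝕜] F := ContinuousLinearMap.smulRight (1 : 𝕜 →L[𝕜] 𝕜) x
  have hK : T ∘L K = K ∘L algebraMap 𝕜 (𝕜 →L[𝕜] 𝕜) μ := by
    ext; simp [K, h]
  simpa [K, ← algebraMap_exp_comm] using DFunLike.congr_fun (exp_comp_eq_comp_exp hK) 1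

end Exponential

theorem IsSelfAdjoint.exp_neg_ofReal_mul_I_smul_mem_unitary {H : Type*} [NormedAddCommGroup H]
    [InnerProductSpace ℂ H] [CompleteSpace H] {A : H →L[ℂ] H} (hA : IsSelfAdjoint A) (τ : ℝ) :
    NormedSpace.exp ((-(τ : ℂ) * Complex.I) • A) ∈ unitary (H →L[ℂ] H) := by
  -- `exp_mem_unitary_of_mem_skewAdjoint` needs a `ℚ`-algebra structure that is not inferred here.
  let _ : NormedAlgebra ℚ (H →L[ℂ] H) := NormedAlgebra.restrictScalars ℚ ℂ _
  refine exp_mem_unitary_of_mem_skewAdjoint (hA.smul_mem_skewAdjoint ?_)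
  simp [skewAdjoint.mem_iff, Complex.conj_ofReal]

-- `exp` only depends on the topology; the L² operator norm makes the matrices a Banach algebra.
open scoped Matrix.Norms.L2Operator in
theorem Matrix.toEuclideanCLM_exp_s7 {𝕜 ι : Type*} [RCLike 𝕜] [Fintype ι] [DecidableEq ι]
    (M : Matrix ι ι 𝕜) :
    toEuclideanCLM (n := ι) (𝕜 := 𝕜) (exp M) = exp (toEuclideanCLM (n := ι) (𝕜 := 𝕜) M) := by
  have hcont : Continuous (toEuclideanCLM (n := ι) (𝕜 := 𝕜)) :=
    LinearMap.continuous_of_finiteDimensional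
      (toEuclideanCLM (n := ι) (𝕜 := 𝕜)).toAlgEquiv.toLinearMap
  exact map_exp_of_mem_ball (𝕂 := 𝕜) _ hcont M
    ((expSeries_radius_eq_top 𝕜 (Matrix ι ι 𝕜)).symm ▸ edist_lt_top _ _)

theorem Matrix.toEuclideanCLM_apply_single {𝕜 ι : Type*} [RCLike 𝕜] [Fintype ι] [DecidableEq ι]
    (M : Matrix ι ι 𝕜) (i j : ι) :
    toEuclideanCLM (n := ι) (𝕜 := 𝕜) M (EuclideanSpace.single j 1) i = M i j := by
  rw [EuclideanSpace.single, PiLp.single, toEuclideanCLM_toLp]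
  simp [mulVec_single]

namespace ConeTail

open scoped InnerProductSpace ComplexConjugate

variable {n : ℕ}

def embed (n : ℕ) : EuclideanSpace ℂ (Fin n) →L[ℂ] coneTailSpace n :=
  ∑ a, (EuclideanSpace.proj a).smulRight (stdVec (Sum.inl a))

lemma embed_apply (g : EuclideanSpace ℂ (Fin n)) :
    embed n g = ∑ a, g a • stdVec (Sum.inl a) := by
  simp [embed]

lemma inner_stdVec_left (x : ConeTailV n) (f : coneTailSpace n) : ⟪stdVec x, f⟫_ℂ = f x := by
  simp [stdVec, lp.inner_single_left]

lemma embed_apply_inl (g : EuclideanSpace ℂ (Fin n)) (a : Fin n) :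
    embed n g (Sum.inl a) = g a := by
  rw [embed_apply, lp.coeFn_sum]
  simp [stdVec, lp.single_apply, Pi.single_apply]

lemma embed_apply_inr (g : EuclideanSpace ℂ (Fin n)) (j : ℕ) :
    embed n g (Sum.inr j) = 0 := by
  rw [embed_apply, lp.coeFn_sum]
  simp [stdVec, lp.single_apply]

lemma inner_embed_left (g : EuclideanSpace ℂ (Fin n)) (f : coneTailSpace n) :
    ⟪embed n g, f⟫_ℂ = ∑ a, conj (g a) * f (Sum.inl a) := by
  simp [embed_apply, inner_stdVec_left, mul_comm]

lemma inner_embed_embed (g h : EuclideanSpace ℂ (Fin n)) :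
    ⟪embed n g, embed n h⟫_ℂ = ⟪g, h⟫_ℂ := by
  simp [inner_embed_left, embed_apply_inl, PiLp.inner_apply, mul_comm]

lemma stdVec_inl (a : Fin n) : stdVec (Sum.inl a) = embed n (EuclideanSpace.single a 1) := by
  ext x
  rcases x with b | j
  · simp [embed_apply_inl, stdVec, lp.single_apply, Pi.single_apply, eq_comm]
  · simp [embed_apply_inr, stdVec, lp.single_apply]

lemma coneTailAdj_inl_inl (G : SimpleGraph (Fin n)) (b a : Fin n) :
    coneTailAdj n G (Sum.inl b) (Sum.inl a) ↔ G.Adj b a := by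
  simp [coneTailAdj]

lemma coneTailAdj_inr_inl (G : SimpleGraph (Fin n)) (j : ℕ) (a : Fin n) :
    coneTailAdj n G (Sum.inr j) (Sum.inl a) ↔ j = 0 := by
  simp [coneTailAdj]

def ones (n : ℕ) : EuclideanSpace ℂ (Fin n) := WithLp.toLp 2 fun _ => 1

lemma inner_ones_left (g : EuclideanSpace ℂ (Fin n)) : ⟪ones n, g⟫_ℂ = ∑ a, g a := by
  simp [ones, PiLp.inner_apply]

lemma inner_ones_ones : ⟪ones n, ones n⟫_ℂ = n := by
  rw [inner_ones_left]
  simp [ones]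

def adjOp (G : SimpleGraph (Fin n)) [DecidableRel G.Adj] :
    EuclideanSpace ℂ (Fin n) →L[ℂ] EuclideanSpace ℂ (Fin n) :=
  toEuclideanCLM (n := Fin n) (𝕜 := ℂ) (G.adjMatrix ℂ)

section Adjacency

variable (G : SimpleGraph (Fin n)) [DecidableRel G.Adj] {A : coneTailSpace n →L[ℂ] coneTailSpace n}

lemma adjOp_apply (g : EuclideanSpace ℂ (Fin n)) (b : Fin n) :
    adjOp G g b = ∑ a, if G.Adj b a then g a else 0 := by
  simp [adjOp, mulVec, dotProduct, SimpleGraph.adjMatrix_apply]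

lemma apply_embed
    (hA : ∀ x y : ConeTailV n, ⟪stdVec x, A (stdVec y)⟫_ℂ = if coneTailAdj n G x y then 1 else 0)
    (g : EuclideanSpace ℂ (Fin n)) :
    A (embed n g) = embed n (adjOp G g) + ⟪ones n, g⟫_ℂ • stdVec (Sum.inr 0) := by
  ext x
  have hx : A (embed n g) x = ∑ a, g a * if coneTailAdj n G x (Sum.inl a) then 1 else 0 := by
    rw [← inner_stdVec_left, embed_apply, map_sum, inner_sum]
    simp only [map_smul, inner_smul_right, hA]
  rw [hx, lp.coeFn_add, Pi.add_apply, lp.coeFn_smul, Pi.smul_apply]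
  rcases x with b | j
  · simp [coneTailAdj_inl_inl, embed_apply_inl, adjOp_apply, stdVec, lp.single_apply]
  · rcases j with _ | j <;>
      simp [coneTailAdj_inr_inl, embed_apply_inr, inner_ones_left, stdVec, lp.single_apply]

def centering (n : ℕ) : EuclideanSpace ℂ (Fin n) →L[ℂ] EuclideanSpace ℂ (Fin n) :=
  1 - (n : ℂ)⁻¹ • (innerSL ℂ (ones n)).smulRight (ones n)

lemma centering_apply (g : EuclideanSpace ℂ (Fin n)) :
    centering n g = g - ((n : ℂ)⁻¹ * ⟪ones n, g⟫_ℂ) • ones n := by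
  simp [centering, mul_smul]

lemma inner_ones_centering [NeZero n] (g : EuclideanSpace ℂ (Fin n)) :
    ⟪ones n, centering n g⟫_ℂ = 0 := by
  have hn : (n : ℂ) ≠ 0 := Nat.cast_ne_zero.mpr (NeZero.ne n)
  rw [centering_apply, inner_sub_right, inner_smul_right, inner_ones_ones]
  field_simp
  ring

lemma centering_single (a : Fin n) :
    centering n (EuclideanSpace.single a 1) = EuclideanSpace.single a 1 - (n : ℂ)⁻¹ • ones n := by
  simp [centering_apply, inner_ones_left]

section Regular

variable {G} {d : ℕ}

lemma adjOp_ones (hreg : G.IsRegularOfDegree d) : adjOp G (ones n) = (d : ℂ) • ones n := by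
  ext b
  simp [adjOp, ones, hreg b]

lemma inner_ones_adjOp (hreg : G.IsRegularOfDegree d) (g : EuclideanSpace ℂ (Fin n)) :
    ⟪ones n, adjOp G g⟫_ℂ = d * ⟪ones n, g⟫_ℂ := by
  have hsymm : ⟪adjOp G (ones n), g⟫_ℂ = ⟪ones n, adjOp G g⟫_ℂ :=
    Matrix.isSymmetric_toEuclideanLin_iff.mpr (G.isHermitian_adjMatrix ℂ) (ones n) g
  rw [← hsymm, adjOp_ones hreg, inner_smul_left]
  simp

lemma adjOp_comp_centering (hreg : G.IsRegularOfDegree d) :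
    adjOp G ∘L centering n = centering n ∘L adjOp G := by
  refine ContinuousLinearMap.ext fun g => ?_
  simp only [ContinuousLinearMap.comp_apply, centering_apply, map_sub, map_smul,
    adjOp_ones hreg, inner_ones_adjOp hreg, smul_smul]
  ring_nf

lemma exp_smul_adjOp_comp_centering (hreg : G.IsRegularOfDegree d) (c : ℂ) :
    exp (c • adjOp G) ∘L centering n = centering n ∘L exp (c • adjOp G) := by
  refine exp_comp_eq_comp_exp ?_
  rw [ContinuousLinearMap.smul_comp, ContinuousLinearMap.comp_smul, adjOp_comp_centering hreg]

lemma exp_smul_adjOp_ones (hreg : G.IsRegularOfDegree d) (c : ℂ) :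
    exp (c • adjOp G) (ones n) = exp (c * d) • ones n :=
  exp_apply_of_apply_eq_smul (by simp [adjOp_ones hreg, smul_smul])

variable [NeZero n]
  (hA : ∀ x y : ConeTailV n, ⟪stdVec x, A (stdVec y)⟫_ℂ = if coneTailAdj n G x y then 1 else 0)
include hA

lemma exp_smul_comp_embed_centering (hreg : G.IsRegularOfDegree d) (c : ℂ) :
    exp (c • A) ∘L (embed n ∘L centering n) = (embed n ∘L centering n) ∘L exp (c • adjOp G) := by
  refine exp_comp_eq_comp_exp (ContinuousLinearMap.ext fun g => ?_)
  have h := apply_embed G hA (centering n g)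
  rw [inner_ones_centering, zero_smul, add_zero, ← ContinuousLinearMap.comp_apply (adjOp G),
    adjOp_comp_centering hreg] at h
  simp [h]

lemma inner_embed_centering_exp_smul_embed_ones (hreg : G.IsRegularOfDegree d)
    (hsa : IsSelfAdjoint A) (c : ℂ) (g : EuclideanSpace ℂ (Fin n)) :
    ⟪embed n (centering n g), exp (c • A) (embed n (ones n))⟫_ℂ = 0 := by
  rw [← ContinuousLinearMap.adjoint_inner_left, ← ContinuousLinearMap.star_eq_adjoint, star_exp,
    star_smul, hsa.star_eq, ← ContinuousLinearMap.comp_apply (embed n),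
    ← ContinuousLinearMap.comp_apply (exp _), exp_smul_comp_embed_centering hA hreg,
    ContinuousLinearMap.comp_apply, ContinuousLinearMap.comp_apply, inner_embed_embed,
    ← inner_conj_symm, inner_ones_centering, map_zero]

theorem inner_stdVec_exp_smul_stdVec (hreg : G.IsRegularOfDegree d) (hsa : IsSelfAdjoint A)
    (c : ℂ) (u v : Fin n) :
    ⟪stdVec (Sum.inl v), exp (c • A) (stdVec (Sum.inl u))⟫_ℂ
      = exp (c • adjOp G) (EuclideanSpace.single u 1) v - (n : ℂ)⁻¹ * exp (c * d)
        + (n : ℂ)⁻¹ * ((n : ℂ)⁻¹ *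
          ⟪embed n (ones n), exp (c • A) (embed n (ones n))⟫_ℂ) := by
  set U := exp (c • A)
  set w := embed n (ones n)
  have hdecomp (a : Fin n) :
      stdVec (Sum.inl a) = embed n (centering n (EuclideanSpace.single a 1)) + (n : ℂ)⁻¹ • w := by
    rw [stdVec_inl, centering_single, map_sub, map_smul, sub_add_cancel]
  have hcentered : ⟪stdVec (Sum.inl v), U (embed n (centering n (EuclideanSpace.single u 1)))⟫_ℂ
      = exp (c • adjOp G) (EuclideanSpace.single u 1) v - (n : ℂ)⁻¹ * exp (c * d) := by
    rw [← ContinuousLinearMap.comp_apply (embed n), ← ContinuousLinearMap.comp_apply U,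
      exp_smul_comp_embed_centering hA hreg, ContinuousLinearMap.comp_apply,
      ContinuousLinearMap.comp_apply, ← ContinuousLinearMap.comp_apply (centering n),
      ← exp_smul_adjOp_comp_centering hreg, ContinuousLinearMap.comp_apply, centering_single,
      map_sub, map_smul, exp_smul_adjOp_ones hreg, stdVec_inl, inner_embed_embed,
      EuclideanSpace.inner_single_left]
    simp [ones]
  have hmean : ⟪stdVec (Sum.inl v), U w⟫_ℂ = (n : ℂ)⁻¹ * ⟪w, U w⟫_ℂ := by
    rw [hdecomp v, inner_add_left, inner_embed_centering_exp_smul_embed_ones hA hreg hsa,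
      inner_smul_left]
    simp
  rw [hdecomp u, map_add, map_smul, inner_add_right, inner_smul_right, hcentered, hmean]

end Regular

end Adjacency

lemma exp_smul_adjOp_single_apply (G : SimpleGraph (Fin n)) [DecidableRel G.Adj] (c : ℂ)
    (u v : Fin n) :
    exp (c • adjOp G) (EuclideanSpace.single u 1) v = exp (c • G.adjMatrix ℂ) v u := by
  rw [adjOp, ← map_smul, ← Matrix.toEuclideanCLM_exp_s7, Matrix.toEuclideanCLM_apply_single]

lemma norm_inner_embed_ones_le {U : coneTailSpace n →L[ℂ] coneTailSpace n}
    (hU : U ∈ unitary (coneTailSpace n →L[ℂ] coneTailSpace n)) :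
    ‖⟪embed n (ones n), U (embed n (ones n))⟫_ℂ‖ ≤ n := by
  calc ‖⟪embed n (ones n), U (embed n (ones n))⟫_ℂ‖
      ≤ ‖embed n (ones n)‖ * ‖U (embed n (ones n))‖ := norm_inner_le_norm _ _
    _ = n := by
      rw [ContinuousLinearMap.norm_map_of_mem_unitary hU, ← inner_self_eq_norm_mul_norm (𝕜 := ℂ),
        inner_embed_embed, inner_ones_ones]
      simp

end ConeTail

lemma one_sub_two_div_le_norm {n : ℕ} (hn : 0 < n) {a b w : ℂ} (ha : ‖a‖ = 1) (hb : ‖b‖ = 1)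
    (hw : ‖w‖ ≤ n) :
    1 - 2 / (n : ℝ) ≤ ‖a - (n : ℂ)⁻¹ * b + (n : ℂ)⁻¹ * ((n : ℂ)⁻¹ * w)‖ := by
  have hnR : (0 : ℝ) < n := Nat.cast_pos.mpr hn
  have hb' : ‖(n : ℂ)⁻¹ * b‖ = 1 / n := by simp [hb]
  have hw' : ‖(n : ℂ)⁻¹ * ((n : ℂ)⁻¹ * w)‖ ≤ 1 / n := by
    rw [norm_mul, norm_mul, norm_inv, Complex.norm_natCast, ← mul_assoc, ← mul_inv, one_div,
      inv_mul_le_iff₀ (by positivity), mul_inv_cancel_right₀ hnR.ne']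
    exact hw
  have h1 := norm_sub_norm_le a ((n : ℂ)⁻¹ * b)
  have h2 := norm_sub_le_norm_add (a - (n : ℂ)⁻¹ * b) ((n : ℂ)⁻¹ * ((n : ℂ)⁻¹ * w))
  have htwo : 2 / (n : ℝ) = 1 / n + 1 / n := by ring
  linarith

theorem cone_tail_pst_general (n d : ℕ) (G : SimpleGraph (Fin n))
    [DecidableRel G.Adj] (hreg : G.IsRegularOfDegree d)
    (u v : Fin n) (τ : ℝ)
    (hpst : ‖NormedSpace.exp ((-(τ : ℂ) * Complex.I) • G.adjMatrix ℂ) v u‖ = 1)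
    (A : coneTailSpace n →L[ℂ] coneTailSpace n) (hsa : IsSelfAdjoint A)
    (hA : ∀ x y : ConeTailV n, (inner ℂ (stdVec x) (A (stdVec y)) : ℂ)
      = if coneTailAdj n G x y then 1 else 0) :
    1 - 2 / (n : ℝ)
      ≤ ‖
          (inner ℂ (stdVec (Sum.inl v : ConeTailV n))
            (NormedSpace.exp ((-(τ : ℂ) * Complex.I) • A)
              (stdVec (Sum.inl u : ConeTailV n))))‖ := by
  have : NeZero n := ⟨(Fin.pos u).ne'⟩
  rw [ConeTail.inner_stdVec_exp_smul_stdVec hA hreg hsa, ConeTail.exp_smul_adjOp_single_apply]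
  refine one_sub_two_div_le_norm (Fin.pos u) hpst ?_
    (ConeTail.norm_inner_embed_ones_le (hsa.exp_neg_ofReal_mul_I_smul_mem_unitary τ))
  rw [← Complex.exp_eq_exp_ℂ, Complex.norm_exp]
  simp

/-- Let `G` be a connected `d`-regular graph on `n` vertices with perfect state transfer
between vertices `u` and `v` at time `τ` (`|⟨e_v, e^{-iτA(G)} e_u⟩| = 1`), and let `H` be
the cone `Ĝ = K_1 + G` with a one-way infinite path attached at the apex.  Then
`|⟨e_v, e^{-iτA(H)} e_u⟩| ≥ 1 - 2/n`: perfect state transfer survives the tail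
asymptotically. -/
theorem cone_tail_pst (n d : ℕ) (G : SimpleGraph (Fin n))
    [DecidableRel G.Adj] (hconn : G.Connected) (hreg : G.IsRegularOfDegree d)
    (u v : Fin n) (τ : ℝ)
    (hpst : ‖NormedSpace.exp ((-(τ : ℂ) * Complex.I) • G.adjMatrix ℂ) v u‖ = 1)
    (A : coneTailSpace n →L[ℂ] coneTailSpace n) (hsa : IsSelfAdjoint A)
    (hA : ∀ x y : ConeTailV n, (inner ℂ (stdVec x) (A (stdVec y)) : ℂ)
      = if coneTailAdj n G x y then 1 else 0) :
    1 - 2 / (n : ℝ)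
      ≤ ‖
          (inner ℂ (stdVec (Sum.inl v : ConeTailV n))
            (NormedSpace.exp ((-(τ : ℂ) * Complex.I) • A)
              (stdVec (Sum.inl u : ConeTailV n))))‖ :=
  cone_tail_pst_general n d G hreg u v τ hpst A hsa hA
end
end
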